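/- For real λ > 0 and integers 0 ≤ k < l, the identity 1/(λ)_{l+k+1} − 1/( (λ)_{2k+2} · (λ+2k+3)_{l−k−1} ) = (l−k−1)/(λ)_{l+k+2} holds, where (x)_p is the Pochhammer symbol. -/

import Mathlib

open Finset

/-- Pochhammer (rising factorial) symbol `(x)_p = x (x+1) ⋯ (x+p-1)`. -/
noncomputable def poch (x : ℝ) (p : ℕ) : ℝ := ∏ i ∈ Finset.range p, (x + i)

/-! Both subtracted fractions have the common denominator `(x)_{n+m+1}`, which factors both as
`(x)_{n+m} (x+n+m)` and as `(x)_n (x+n) (x+n+1)_m`; the numerators then differ by exactly `m`. -/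

lemma poch_succ (x : ℝ) (n : ℕ) : poch x (n + 1) = poch x n * (x + n) :=
  Finset.prod_range_succ _ _

lemma poch_add (x : ℝ) (a b : ℕ) : poch x (a + b) = poch x a * poch (x + a) b := by
  unfold poch
  rw [Finset.prod_range_add]
  congr 1
  refine Finset.prod_congr rfl fun i _ => ?_
  push_cast
  ring

lemma poch_pos {x : ℝ} (hx : 0 < x) (p : ℕ) : 0 < poch x p :=
  Finset.prod_pos fun _ _ => by positivity

lemma poch_succ_add (x : ℝ) (n m : ℕ) :
    poch x (n + m + 1) = (x + n) * (poch x n * poch (x + n + 1) m) := by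
  rw [add_right_comm, poch_add, poch_succ, Nat.cast_succ, ← add_assoc]
  ring

theorem one_div_poch_sub_one_div_poch_mul_poch {x : ℝ} {n m : ℕ} (h : poch x (n + m + 1) ≠ 0) :
    1 / poch x (n + m) - 1 / (poch x n * poch (x + n + 1) m) = m / poch x (n + m + 1) := by
  have hlast := poch_succ x (n + m)
  have hsplit := poch_succ_add x n m
  have hN : x + ↑(n + m) ≠ 0 := right_ne_zero_of_mul (hlast ▸ h)
  have hn : x + n ≠ 0 := left_ne_zero_of_mul (hsplit ▸ h)
  have hfirst : 1 / poch x (n + m) = (x + ↑(n + m)) / poch x (n + m + 1) := by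
    rw [hlast, div_mul_cancel_right₀ hN, one_div]
  have hsecond : 1 / (poch x n * poch (x + n + 1) m) = (x + n) / poch x (n + m + 1) := by
    rw [hsplit, div_mul_cancel_left₀ hn, one_div]
  rw [hfirst, hsecond, div_sub_div_same]
  push_cast
  ring

theorem stmt5 (lam : ℝ) (hlam : 0 < lam) (k l : ℕ) (hkl : k < l) :
    1 / poch lam (l + k + 1) -
        1 / (poch lam (2 * k + 2) * poch (lam + 2 * k + 3) (l - k - 1)) =
      ((l : ℝ) - (k : ℝ) - 1) / poch lam (l + k + 2) := by
  obtain ⟨m, rfl⟩ : ∃ m, l = k + 1 + m := ⟨l - k - 1, by omega⟩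
  have key := one_div_poch_sub_one_div_poch_mul_poch (n := 2 * k + 2) (m := m)
    (poch_pos hlam _).ne'
  rw [show k + 1 + m + k + 1 = 2 * k + 2 + m by ring,
    show k + 1 + m + k + 2 = 2 * k + 2 + m + 1 by ring, show k + 1 + m - k - 1 = m by omega,
    show lam + 2 * k + 3 = lam + ↑(2 * k + 2) + 1 by push_cast; ring, key]
  push_cast
  ring
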